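/- Let λ > 0, let n, q, d ≥ 1, let X⁰ ∈ ℝ^{n×d} be the unpoisoned design matrix and Z ∈ ℝ^{q×d} the matrix of poisoning samples, and let X ∈ ℝ^{(n+q)×d} be the matrix obtained by stacking X⁰ on top of Z. Let y⁰ ∈ [0,1]^n and y^p ∈ [0,1]^q be the unpoisoned and poisoned response vectors, let y ∈ ℝ^{n+q} be their concatenation, and let ŷ = (∑_{i=1}^n y⁰_i + ∑_{k=1}^q y^p_k)/(n+q) be the mean response. Let σ denote the smallest singular value of X⁰ and assume σ ≥ √λ. Then the ridge regression weight vector θ̃ = (XᵀX + λI)⁻¹ Xᵀ (y − ŷ·1_{n+q}) satisfies, for every coordinate i, |θ̃_i| ≤ (σ/(σ² + λ)) · ( ‖y⁰‖₂ + √q + (∑_{i=1}^n y⁰_i + q)/√(n+q) ). -/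

import Mathlib

open Matrix

/-- The smallest eigenvalue of a real symmetric matrix, characterized as the
infimum of the Rayleigh quotient `vᵀ M v` over the unit sphere `‖v‖₂ = 1`. -/
noncomputable def smallestEig {d : ℕ} (M : Matrix (Fin d) (Fin d) ℝ) : ℝ :=
  sInf {r : ℝ | ∃ v : Fin d → ℝ, (∑ i, (v i) ^ 2) = 1 ∧ r = v ⬝ᵥ M.mulVec v}

/-!
Pairing the normal equation `(XᵀX + λ) θ = Xᵀ r` with `θ` gives
`‖Xθ‖² + λ‖θ‖² = ⟪Xθ, r⟫ ≤ ‖Xθ‖ ‖r‖`, i.e. `‖r‖ ≥ t + λ‖θ‖²/t` for `t = ‖Xθ‖`.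
The rows of `X⁰` force `t ≥ σ‖θ‖ ≥ √λ ‖θ‖`, a range on which `t ↦ t + λ‖θ‖²/t` is
increasing, so `‖r‖ ≥ (σ² + λ)‖θ‖/σ`. Subtracting the mean is an orthogonal projection,
hence `‖y − ŷ·1‖ ≤ ‖y‖ ≤ ‖y⁰‖ + ‖yᵖ‖ ≤ ‖y⁰‖ + √q`.
-/

lemma Real.sqrt_add_le_add_sqrt {a b : ℝ} (ha : 0 ≤ a) (hb : 0 ≤ b) :
    √(a + b) ≤ √a + √b := by
  rw [Real.sqrt_le_left (by positivity)]
  nlinarith [Real.sq_sqrt ha, Real.sq_sqrt hb, Real.sqrt_nonneg a, Real.sqrt_nonneg b]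

lemma abs_le_sqrt_sum_sq {ι : Type*} [Fintype ι] (v : ι → ℝ) (i : ι) :
    |v i| ≤ √(∑ j, v j ^ 2) :=
  Real.abs_le_sqrt (Finset.single_le_sum (fun j _ => sq_nonneg (v j)) (Finset.mem_univ i))

lemma sum_sub_mean_sq_le {ι : Type*} [Fintype ι] (y : ι → ℝ) :
    ∑ i, (y i - (∑ j, y j) / Fintype.card ι) ^ 2 ≤ ∑ i, y i ^ 2 := by
  set N : ℝ := (Fintype.card ι : ℝ)
  set c := (∑ j, y j) / N
  have hsum : ∑ j, y j = N * c := by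
    rcases eq_or_ne N 0 with hN | hN
    · have : IsEmpty ι := Fintype.card_eq_zero_iff.1 (Nat.cast_eq_zero.1 hN)
      simp [hN]
    · exact (mul_div_cancel₀ _ hN).symm
  have hexpand : ∑ i, (y i - c) ^ 2 = ∑ i, y i ^ 2 - N * c ^ 2 := by
    simp only [sub_sq, Finset.sum_add_distrib, Finset.sum_sub_distrib, ← Finset.sum_mul,
      ← Finset.mul_sum, Finset.sum_const, Finset.card_univ, nsmul_eq_mul, hsum]
    ring
  rw [hexpand, sub_le_self_iff]
  positivity

lemma sqrt_sum_sq_sumElim_le {ι κ : Type*} [Fintype ι] [Fintype κ] (a : ι → ℝ) (b : κ → ℝ) :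
    √(∑ j, Sum.elim a b j ^ 2) ≤ √(∑ i, a i ^ 2) + √(∑ k, b k ^ 2) := by
  rw [Fintype.sum_sum_type]
  exact Real.sqrt_add_le_add_sqrt (by positivity) (by positivity)

lemma sqrt_sum_sq_sub_mean_sumElim_le {ι κ : Type*} [Fintype ι] [Fintype κ] (a : ι → ℝ)
    {b : κ → ℝ} (hb : ∀ k, b k ∈ Set.Icc (0 : ℝ) 1) :
    √(∑ j, (Sum.elim a b j - (∑ i, a i + ∑ k, b k) / (Fintype.card ι + Fintype.card κ)) ^ 2) ≤
      √(∑ i, a i ^ 2) + √(Fintype.card κ) := by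
  have hmean : ∑ j, Sum.elim a b j = ∑ i, a i + ∑ k, b k := Fintype.sum_sum_type _
  have hcard : (Fintype.card (ι ⊕ κ) : ℝ) = Fintype.card ι + Fintype.card κ := by
    rw [Fintype.card_sum, Nat.cast_add]
  have hb_sq : ∑ k, b k ^ 2 ≤ Fintype.card κ := by
    simpa using Finset.sum_le_sum (s := Finset.univ) fun k _ =>
      pow_le_one₀ (n := 2) (hb k).1 (hb k).2
  calc _ ≤ √(∑ j, Sum.elim a b j ^ 2) := by
        rw [← hmean, ← hcard]
        exact Real.sqrt_le_sqrt (sum_sub_mean_sq_le _)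
    _ ≤ √(∑ i, a i ^ 2) + √(∑ k, b k ^ 2) := sqrt_sum_sq_sumElim_le a b
    _ ≤ √(∑ i, a i ^ 2) + √(Fintype.card κ) := by gcongr

lemma dotProduct_transpose_mul_self_mulVec {m k : Type*} [Fintype m] [Fintype k]
    (A : Matrix m k ℝ) (v : k → ℝ) : v ⬝ᵥ (Aᵀ * A) *ᵥ v = ∑ j, (A *ᵥ v) j ^ 2 := by
  rw [← mulVec_mulVec, dotProduct_mulVec, vecMul_transpose]
  simp only [dotProduct, sq]

lemma posSemidef_transpose_mul_self {m k : Type*} [Fintype m] [Fintype k]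
    (A : Matrix m k ℝ) : (Aᵀ * A).PosSemidef := by
  simpa only [conjTranspose_eq_transpose_of_trivial] using posSemidef_conjTranspose_mul_self A

lemma smallestEig_mul_sum_sq_le {d : ℕ} {M : Matrix (Fin d) (Fin d) ℝ} (hM : M.PosSemidef)
    (v : Fin d → ℝ) : smallestEig M * ∑ i, v i ^ 2 ≤ v ⬝ᵥ M *ᵥ v := by
  have hnonneg : ∀ u : Fin d → ℝ, 0 ≤ u ⬝ᵥ M *ᵥ u := by
    simpa using hM.dotProduct_mulVec_nonneg
  set s := ∑ i, v i ^ 2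
  rcases (Finset.sum_nonneg fun i _ => sq_nonneg (v i) : 0 ≤ s).eq_or_lt with hs | hs
  · rw [show s = 0 from hs.symm, mul_zero]
    exact hnonneg v
  set c := (√s)⁻¹
  have hc : c ^ 2 * s = 1 := by
    rw [inv_pow, Real.sq_sqrt hs.le, inv_mul_cancel₀ hs.ne']
  have hunit : ∑ i, (c • v) i ^ 2 = 1 := by
    simp only [Pi.smul_apply, smul_eq_mul, mul_pow, ← Finset.mul_sum]
    exact hc
  have hmin : smallestEig M ≤ c ^ 2 * (v ⬝ᵥ M *ᵥ v) := by
    refine csInf_le ⟨0, ?_⟩ ⟨c • v, hunit, ?_⟩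
    · rintro r ⟨u, -, rfl⟩
      exact hnonneg u
    · rw [mulVec_smul, smul_dotProduct, dotProduct_smul, smul_eq_mul, smul_eq_mul]
      ring
  calc smallestEig M * s ≤ c ^ 2 * (v ⬝ᵥ M *ᵥ v) * s :=
        mul_le_mul_of_nonneg_right hmin hs.le
    _ = v ⬝ᵥ M *ᵥ v := by rw [mul_right_comm, hc, one_mul]

lemma smallestEig_transpose_mul_self_mul_sum_sq_le {m : Type*} [Fintype m] {d : ℕ}
    (A : Matrix m (Fin d) ℝ) (v : Fin d → ℝ) :
    smallestEig (Aᵀ * A) * ∑ i, v i ^ 2 ≤ ∑ j, (A *ᵥ v) j ^ 2 :=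
  (smallestEig_mul_sum_sq_le (posSemidef_transpose_mul_self A) v).trans_eq
    (dotProduct_transpose_mul_self_mulVec A v)

lemma sum_sq_mulVec_le_fromRows {m₁ m₂ k : Type*} [Fintype m₁] [Fintype m₂] [Fintype k]
    (A : Matrix m₁ k ℝ) (B : Matrix m₂ k ℝ) (v : k → ℝ) :
    ∑ j, (A *ᵥ v) j ^ 2 ≤ ∑ j, (fromRows A B *ᵥ v) j ^ 2 := by
  rw [fromRows_mulVec, Fintype.sum_sum_type]
  simp only [Sum.elim_inl, Sum.elim_inr, le_add_iff_nonneg_right]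
  positivity

section Ridge

variable {m k : Type*} [Fintype m] [Fintype k] [DecidableEq k]

lemma ridge_mulVec_inv_mulVec (X : Matrix m k ℝ) {lam : ℝ} (hlam : 0 < lam) (b : k → ℝ) :
    (Xᵀ * X + lam • 1) *ᵥ ((Xᵀ * X + lam • 1)⁻¹ *ᵥ b) = b := by
  have hpd : (Xᵀ * X + lam • 1).PosDef :=
    PosDef.posSemidef_add (posSemidef_transpose_mul_self X) (PosDef.one.smul hlam)
  rw [mulVec_mulVec, mul_nonsing_inv _ ((isUnit_iff_isUnit_det _).1 hpd.isUnit), one_mulVec]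

lemma ridge_energy_identity {X : Matrix m k ℝ} {lam : ℝ} {r : m → ℝ} {θ : k → ℝ}
    (hθ : (Xᵀ * X + lam • 1) *ᵥ θ = Xᵀ *ᵥ r) :
    ∑ j, (X *ᵥ θ) j ^ 2 + lam * ∑ i, θ i ^ 2 = ∑ j, (X *ᵥ θ) j * r j := by
  have h := congrArg (θ ⬝ᵥ ·) hθ
  rw [add_mulVec, dotProduct_add, dotProduct_transpose_mul_self_mulVec, smul_mulVec,
    one_mulVec, dotProduct_smul, smul_eq_mul, dotProduct_mulVec, vecMul_transpose] at h
  simpa only [dotProduct, sq, mul_comm (r _)] using h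

lemma ridge_norm_bound {X : Matrix m k ℝ} {lam σ : ℝ} {r : m → ℝ} {θ : k → ℝ} (hσ : 0 < σ)
    (hlam : lam ≤ σ ^ 2) (hX : σ ^ 2 * ∑ i, θ i ^ 2 ≤ ∑ j, (X *ᵥ θ) j ^ 2)
    (hθ : (Xᵀ * X + lam • 1) *ᵥ θ = Xᵀ *ᵥ r) :
    (σ ^ 2 + lam) * √(∑ i, θ i ^ 2) ≤ σ * √(∑ j, r j ^ 2) := by
  set s := √(∑ i, θ i ^ 2)
  set t := √(∑ j, (X *ᵥ θ) j ^ 2)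
  set R := √(∑ j, r j ^ 2)
  have hts : σ * s ≤ t := by
    rw [← Real.sqrt_sq hσ.le, ← Real.sqrt_mul (sq_nonneg σ)]
    exact Real.sqrt_le_sqrt hX
  have henergy : t ^ 2 + lam * s ^ 2 ≤ t * R := by
    rw [Real.sq_sqrt (by positivity), Real.sq_sqrt (by positivity), ridge_energy_identity hθ]
    exact Real.sum_mul_le_sqrt_mul_sqrt _ _ _
  rcases (Real.sqrt_nonneg _ : 0 ≤ s).eq_or_lt with hs | hs
  · rw [show s = 0 from hs.symm, mul_zero]
    positivity
  have ht : 0 < t := (mul_pos hσ hs).trans_le hts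
  -- `σ (t² + λ s²) - (σ² + λ) s t` factors as `(t - σ s)(σ t - λ s)`
  have hfactor : 0 ≤ (t - σ * s) * (σ * t - lam * s) :=
    mul_nonneg (by linarith) (by nlinarith)
  refine le_of_mul_le_mul_right ?_ ht
  nlinarith

end Ridge

theorem ridge_weights_poisoning_bound_general (lam : ℝ) (hlam : 0 < lam)
    (n q d : ℕ)
    (X0 : Matrix (Fin n) (Fin d) ℝ) (Z : Matrix (Fin q) (Fin d) ℝ)
    (X : Matrix (Fin n ⊕ Fin q) (Fin d) ℝ) (hX : X = Matrix.fromRows X0 Z)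
    (y0 : Fin n → ℝ) (hy0 : ∀ i, y0 i ∈ Set.Icc (0 : ℝ) 1)
    (yp : Fin q → ℝ) (hyp : ∀ k, yp k ∈ Set.Icc (0 : ℝ) 1)
    (y : Fin n ⊕ Fin q → ℝ) (hy : y = Sum.elim y0 yp)
    (ybar : ℝ) (hybar : ybar = (∑ i, y0 i + ∑ k, yp k) / ((n : ℝ) + q))
    (σ : ℝ) (hσdef : σ = Real.sqrt (smallestEig (X0ᵀ * X0)))
    (hσ : Real.sqrt lam ≤ σ)
    (θ : Fin d → ℝ)
    (hθ : θ = (Xᵀ * X + lam • (1 : Matrix (Fin d) (Fin d) ℝ))⁻¹.mulVec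
      (Xᵀ.mulVec (y - Function.const (Fin n ⊕ Fin q) ybar))) :
    ∀ i, |θ i| ≤ (σ / (σ ^ 2 + lam)) *
      (Real.sqrt (∑ i, (y0 i) ^ 2) + Real.sqrt q +
        (∑ i, y0 i + q) / Real.sqrt ((n : ℝ) + q)) := by
  intro i
  set r := y - Function.const (Fin n ⊕ Fin q) ybar
  have hσpos : 0 < σ := (Real.sqrt_pos.2 hlam).trans_le hσ
  have hlam_le : lam ≤ σ ^ 2 := (Real.sqrt_le_left hσpos.le).1 hσ
  have hgram : σ ^ 2 * ∑ j, θ j ^ 2 ≤ ∑ j, (X *ᵥ θ) j ^ 2 := by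
    rw [hσdef, Real.sq_sqrt (Real.sqrt_pos.1 (hσdef ▸ hσpos)).le, hX]
    exact (smallestEig_transpose_mul_self_mul_sum_sq_le X0 θ).trans
      (sum_sq_mulVec_le_fromRows X0 Z θ)
  have hnormal : (Xᵀ * X + lam • 1) *ᵥ θ = Xᵀ *ᵥ r := by
    rw [hθ]
    exact ridge_mulVec_inv_mulVec X hlam _
  have hresid : √(∑ j, r j ^ 2) ≤ √(∑ i, y0 i ^ 2) + √q := by
    simpa [r, hy, hybar] using sqrt_sum_sq_sub_mean_sumElim_le y0 hyp
  have hslack : 0 ≤ (∑ i, y0 i + q) / √((n : ℝ) + q) := by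
    have : 0 ≤ ∑ i, y0 i := Finset.sum_nonneg fun i _ => (hy0 i).1
    positivity
  calc |θ i| ≤ √(∑ j, θ j ^ 2) := abs_le_sqrt_sum_sq θ i
    _ ≤ σ / (σ ^ 2 + lam) * √(∑ j, r j ^ 2) := by
      rw [div_mul_eq_mul_div, le_div_iff₀ (by positivity), mul_comm]
      exact ridge_norm_bound hσpos hlam_le hgram hnormal
    _ ≤ σ / (σ ^ 2 + lam) * (√(∑ i, y0 i ^ 2) + √q) := by gcongr
    _ ≤ _ := mul_le_mul_of_nonneg_left (le_add_of_nonneg_right hslack) (by positivity)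

/-- coordinatewise bound on the ridge regression weight vector
fitted on poisoned data, in terms of the smallest singular value `σ` of the
unpoisoned design matrix `X⁰` (the square root of the smallest eigenvalue of
`X⁰ᵀX⁰`), assuming `σ ≥ √λ`. -/
theorem ridge_weights_poisoning_bound (lam : ℝ) (hlam : 0 < lam)
    (n q d : ℕ) (hn : 1 ≤ n) (hq : 1 ≤ q) (hd : 1 ≤ d)
    (X0 : Matrix (Fin n) (Fin d) ℝ) (Z : Matrix (Fin q) (Fin d) ℝ)
    (X : Matrix (Fin n ⊕ Fin q) (Fin d) ℝ) (hX : X = Matrix.fromRows X0 Z)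
    (y0 : Fin n → ℝ) (hy0 : ∀ i, y0 i ∈ Set.Icc (0 : ℝ) 1)
    (yp : Fin q → ℝ) (hyp : ∀ k, yp k ∈ Set.Icc (0 : ℝ) 1)
    (y : Fin n ⊕ Fin q → ℝ) (hy : y = Sum.elim y0 yp)
    (ybar : ℝ) (hybar : ybar = (∑ i, y0 i + ∑ k, yp k) / ((n : ℝ) + q))
    (σ : ℝ) (hσdef : σ = Real.sqrt (smallestEig (X0ᵀ * X0)))
    (hσ : Real.sqrt lam ≤ σ)
    (θ : Fin d → ℝ)
    (hθ : θ = (Xᵀ * X + lam • (1 : Matrix (Fin d) (Fin d) ℝ))⁻¹.mulVec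
      (Xᵀ.mulVec (y - Function.const (Fin n ⊕ Fin q) ybar))) :
    ∀ i, |θ i| ≤ (σ / (σ ^ 2 + lam)) *
      (Real.sqrt (∑ i, (y0 i) ^ 2) + Real.sqrt q +
        (∑ i, y0 i + q) / Real.sqrt ((n : ℝ) + q)) :=
  ridge_weights_poisoning_bound_general lam hlam n q d X0 Z X hX y0 hy0 yp hyp y hy ybar hybar σ
    hσdef hσ θ hθ
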